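/- Let X, Y, Z be independent real Gaussian random variables (mean 0, variance 1−t for fixed t ∈ [0,1)), and fix reals x, y, z. Define g(x,y) = E[ N(X+x | Z+z, 1) · N(Y+y | Z+z, 1) / ( N(X+x | 0,1) · N(Y+y | 0,1) ) ], where N(a|μ,σ²) denotes the Gaussian density. Then in general g(x,y) does not factor as a product g₁(x)·g₂(y): there exist t, z and points x,y,x',y' with g(x,y)·g(x',y') ≠ g(x,y')·g(x',y). -/

import Mathlib

open MeasureTheory Real

/-- Gaussian density `N(a | μ, σ²)`. -/
noncomputable def gaussPdf (a μ σ2 : ℝ) : ℝ :=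
  (Real.sqrt (2 * Real.pi * σ2))⁻¹ * Real.exp (-((a - μ) ^ 2) / (2 * σ2))

/-- `gRatio t z x y = E[ N(X+x|Z+z,1)·N(Y+y|Z+z,1) / (N(X+x|0,1)·N(Y+y|0,1)) ]`, the
expectation over independent `X, Y, Z ∼ N(0, 1−t)`, written as an integral against the
product Gaussian density. -/
noncomputable def gRatio (t z x y : ℝ) : ℝ :=
  ∫ p : ℝ × ℝ × ℝ,
    (gaussPdf (p.1 + x) (p.2.2 + z) 1 * gaussPdf (p.2.1 + y) (p.2.2 + z) 1 /
      (gaussPdf (p.1 + x) 0 1 * gaussPdf (p.2.1 + y) 0 1)) *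
    (gaussPdf p.1 0 (1 - t) * gaussPdf p.2.1 0 (1 - t) * gaussPdf p.2.2 0 (1 - t))

/-!
At `t = 0`, `z = 0` the likelihood ratio inside `gRatio` is `exp ((X + x) Z + (Y + y) Z - Z²)`.
Integrating out `X` and then `Y` with the Gaussian moment generating function
`E[exp (c X)] = exp (c² / 2)` produces `exp (Z² / 2)` twice, which cancels `exp (-Z²)`, and a last
application in `Z` gives `gRatio 0 0 x y = exp ((x + y)² / 2)`. This is not a product of a
function of `x` and a function of `y`: the cross ratio at `x, y ∈ {0, 1}` is `e² ≠ e`.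
-/

open ProbabilityTheory

lemma gaussPdf_one_eq_gaussianPDFReal (a μ : ℝ) : gaussPdf a μ 1 = gaussianPDFReal μ 1 a := by
  rw [← NNReal.coe_one]; rfl

lemma gaussPdf_div_gaussPdf (a μ ν σ2 : ℝ) (hσ : 0 < σ2) :
    gaussPdf a μ σ2 / gaussPdf a ν σ2 = exp ((a * (μ - ν) - (μ ^ 2 - ν ^ 2) / 2) / σ2) := by
  have hs : 0 < √(2 * π * σ2) := by positivity
  rw [gaussPdf, gaussPdf, mul_div_mul_left _ _ (inv_ne_zero hs.ne'), ← exp_sub]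
  congr 1
  field_simp
  ring

lemma integrable_exp_mul_gaussianPDFReal (μ : ℝ) {v : NNReal} (hv : v ≠ 0) (c : ℝ) :
    Integrable (fun w => exp (c * w) * gaussianPDFReal μ v w) := by
  have h := integrable_exp_mul_gaussianReal (μ := μ) (v := v) c
  rw [gaussianReal_of_var_ne_zero _ hv, gaussianPDF_def,
    integrable_withDensity_iff_integrable_smul' (by fun_prop) (by simp)] at h
  simpa [ENNReal.toReal_ofReal (gaussianPDFReal_nonneg _ _ _), mul_comm] using h

lemma integral_exp_mul_gaussianPDFReal (μ : ℝ) {v : NNReal} (hv : v ≠ 0) (c : ℝ) :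
    ∫ w, exp (c * w) * gaussianPDFReal μ v w = exp (μ * c + v * c ^ 2 / 2) := by
  have h := congrFun (mgf_fun_id_gaussianReal (μ := μ) (v := v)) c
  rw [mgf, integral_gaussianReal_eq_integral_smul hv] at h
  simpa [mul_comm] using h

section GaussianTilt

variable {β : Type*} [MeasurableSpace β] {ν : Measure β} [SFinite ν] {c h : β → ℝ}
  (μ : ℝ) {v : NNReal}

lemma integrable_prod_exp_mul_gaussianPDFReal (hv : v ≠ 0) (hc : Measurable c)
    (hh : AEStronglyMeasurable h ν)
    (hint : Integrable (fun y => exp (μ * c y + v * c y ^ 2 / 2) * h y) ν) :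
    Integrable (fun p : ℝ × β => exp (c p.2 * p.1) * gaussianPDFReal μ v p.1 * h p.2)
      (volume.prod ν) := by
  have hmeas : AEStronglyMeasurable
      (fun p : ℝ × β => exp (c p.2 * p.1) * gaussianPDFReal μ v p.1) (volume.prod ν) := by
    have := measurable_gaussianPDFReal μ v
    fun_prop
  refine (integrable_prod_iff' (hmeas.mul hh.comp_snd)).2
    ⟨ae_of_all _ fun y => (integrable_exp_mul_gaussianPDFReal μ hv (c y)).mul_const (h y), ?_⟩
  simp only [Pi.mul_apply, norm_mul, norm_of_nonneg (exp_pos _).le,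
    norm_of_nonneg (gaussianPDFReal_nonneg μ v _), integral_mul_const,
    integral_exp_mul_gaussianPDFReal μ hv]
  simpa only [norm_mul, norm_of_nonneg (exp_pos _).le] using hint.norm

lemma integral_prod_exp_mul_gaussianPDFReal (hv : v ≠ 0) (hc : Measurable c)
    (hh : AEStronglyMeasurable h ν)
    (hint : Integrable (fun y => exp (μ * c y + v * c y ^ 2 / 2) * h y) ν) :
    ∫ p : ℝ × β, exp (c p.2 * p.1) * gaussianPDFReal μ v p.1 * h p.2 ∂(volume.prod ν) =
      ∫ y, exp (μ * c y + v * c y ^ 2 / 2) * h y ∂ν := by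
  rw [integral_prod_symm _ (integrable_prod_exp_mul_gaussianPDFReal μ hv hc hh hint)]
  simp only [integral_mul_const, integral_exp_mul_gaussianPDFReal μ hv]

end GaussianTilt

lemma gRatio_zero_zero_eq_integral (x y : ℝ) :
    gRatio 0 0 x y = ∫ p : ℝ × ℝ × ℝ, exp (p.2.2 * p.1) * gaussianPDFReal 0 1 p.1 *
      (exp (p.2.2 * p.2.1) * gaussianPDFReal 0 1 p.2.1 *
        (exp ((x + y) * p.2.2 - p.2.2 ^ 2) * gaussianPDFReal 0 1 p.2.2)) := by
  refine integral_congr_ae (ae_of_all _ fun ⟨X, Y, Z⟩ => ?_)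
  dsimp only
  rw [add_zero, sub_zero, mul_div_mul_comm, gaussPdf_div_gaussPdf _ _ _ _ one_pos,
    gaussPdf_div_gaussPdf _ _ _ _ one_pos, ← exp_add,
    show ((X + x) * (Z - 0) - (Z ^ 2 - 0 ^ 2) / 2) / 1 +
        ((Y + y) * (Z - 0) - (Z ^ 2 - 0 ^ 2) / 2) / 1 =
      Z * X + Z * Y + ((x + y) * Z - Z ^ 2) by ring, exp_add, exp_add]
  simp only [gaussPdf_one_eq_gaussianPDFReal]
  ring

lemma gRatio_zero_zero (x y : ℝ) : gRatio 0 0 x y = exp ((x + y) ^ 2 / 2) := by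
  have tilt (Z u : ℝ) :
      exp (0 * Z + ((1 : NNReal) : ℝ) * Z ^ 2 / 2) * exp u = exp (u + Z ^ 2 / 2) := by
    rw [NNReal.coe_one, ← exp_add]; ring_nf
  have hZ : (fun Z : ℝ => exp (0 * id Z + ((1 : NNReal) : ℝ) * id Z ^ 2 / 2) *
      (exp ((x + y) * Z - Z ^ 2 / 2) * gaussianPDFReal 0 1 Z)) =
      fun Z => exp ((x + y) * Z) * gaussianPDFReal 0 1 Z := by
    ext Z
    rw [id_eq, ← mul_assoc, tilt]; ring_nf
  have hYZ : (fun q : ℝ × ℝ => exp (0 * q.2 + ((1 : NNReal) : ℝ) * q.2 ^ 2 / 2) *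
      (exp (q.2 * q.1) * gaussianPDFReal 0 1 q.1 *
        (exp ((x + y) * q.2 - q.2 ^ 2) * gaussianPDFReal 0 1 q.2))) =
      fun q => exp (id q.2 * q.1) * gaussianPDFReal 0 1 q.1 *
        (exp ((x + y) * q.2 - q.2 ^ 2 / 2) * gaussianPDFReal 0 1 q.2) := by
    ext q
    rw [mul_left_comm (exp _), ← mul_assoc (exp _) (exp _), tilt, id_eq]; ring_nf
  have hZint := integrable_exp_mul_gaussianPDFReal 0 one_ne_zero (x + y)
  rw [← hZ] at hZint
  have hYZint := integrable_prod_exp_mul_gaussianPDFReal 0 one_ne_zero measurable_id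
    (by fun_prop) hZint
  rw [← Measure.volume_eq_prod, ← hYZ] at hYZint
  rw [gRatio_zero_zero_eq_integral, Measure.volume_eq_prod,
    integral_prod_exp_mul_gaussianPDFReal (c := Prod.snd) 0 one_ne_zero measurable_snd
      (by fun_prop) hYZint, hYZ, Measure.volume_eq_prod,
    integral_prod_exp_mul_gaussianPDFReal 0 one_ne_zero measurable_id (by fun_prop) hZint, hZ,
    integral_exp_mul_gaussianPDFReal 0 one_ne_zero]
  simp

/-- The function `g(x,y) = gRatio t z x y` does not factor as a product `g₁(x)·g₂(y)` in
general: there exist `t ∈ [0,1)`, `z`, and points `x, y, x', y'` with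
`g(x,y)·g(x',y') ≠ g(x,y')·g(x',y)`. The heat semigroup destroys conditional independence
structure (Remark 1 of the paper). -/
theorem heat_semigroup_breaks_conditional_independence :
    ∃ (t z : ℝ), 0 ≤ t ∧ t < 1 ∧ ∃ x y x' y' : ℝ,
      gRatio t z x y * gRatio t z x' y' ≠ gRatio t z x y' * gRatio t z x' y := by
  refine ⟨0, 0, le_rfl, one_pos, 1, 1, 0, 0, ?_⟩
  simp only [gRatio_zero_zero, ← exp_add, ne_eq, exp_eq_exp]
  norm_num
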